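/- Let g be a finite-dimensional Lie algebra over ℂ and let r be its solvable radical. Then the solvable radical of the quotient Lie algebra g/⁅g, r⁆ equals the center of g/⁅g, r⁆; in particular, g/⁅g, r⁆ is a reductive Lie algebra. -/

import Mathlib

/-!
Write `J = ⁅g, r⁆` and `π : g → g/J`. Since `J ≤ r`, the preimage under `π` of a solvable ideal
of `g/J` is an extension of a solvable ideal by a subideal of `r`, hence solvable, so the radical
of `g/J` lies in `π r`. Since `⁅g, r⁆` is killed by `π`, the ideal `π r` is central.
-/

open LieAlgebra

section

variable {R L L' : Type*} [CommRing R] [LieRing L] [LieAlgebra R L] [LieRing L'] [LieAlgebra R L']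

namespace LieIdeal

def quotientMk (I : LieIdeal R L) : L →ₗ⁅R⁆ L ⧸ I :=
  { (LieSubmodule.Quotient.mk' I : L →ₗ[R] L ⧸ I) with map_lie' := rfl }

lemma quotientMk_surjective (I : LieIdeal R L) : Function.Surjective I.quotientMk :=
  LieSubmodule.Quotient.surjective_mk' I

@[simp]
lemma ker_quotientMk (I : LieIdeal R L) : I.quotientMk.ker = I := by
  ext x
  exact LieSubmodule.Quotient.mk_eq_zero'

lemma map_derivedSeriesOfIdeal_le (f : L →ₗ⁅R⁆ L') (I : LieIdeal R L) (k : ℕ) :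
    (derivedSeriesOfIdeal R L k I).map f ≤ derivedSeriesOfIdeal R L' k (I.map f) := by
  induction k with
  | zero => exact le_rfl
  | succ k ih =>
    rw [derivedSeriesOfIdeal_succ, derivedSeriesOfIdeal_succ]
    exact (map_bracket_le f).trans (LieSubmodule.mono_lie ih ih)

section Noetherian

variable [IsNoetherian R L] [IsNoetherian R L']

lemma comap_le_radical_of_ker_le_radical (f : L →ₗ⁅R⁆ L')
    (hker : f.ker ≤ radical R L) : (radical R L').comap f ≤ radical R L := by
  set P := (radical R L').comap f
  obtain ⟨k, hk⟩ := IsSolvable.solvable R (radical R L')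
  obtain ⟨l, hl⟩ := IsSolvable.solvable R (radical R L)
  rw [derivedSeries_eq_bot_iff] at hk hl
  have hPk : derivedSeriesOfIdeal R L k P ≤ radical R L := by
    refine le_trans ?_ hker
    rw [← map_eq_bot_iff, ← le_bot_iff, ← hk]
    exact (map_derivedSeriesOfIdeal_le f P k).trans
      (derivedSeriesOfIdeal_mono LieIdeal.map_comap_le k)
  have hP : IsSolvable P := by
    refine (isSolvable_iff R P).mpr ⟨l + k, ?_⟩
    rw [derivedSeries_eq_bot_iff, derivedSeriesOfIdeal_add, ← le_bot_iff, ← hl]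
    exact derivedSeriesOfIdeal_mono hPk l
  exact (LieIdeal.solvable_iff_le_radical R L P).mp hP

lemma radical_le_map_radical {f : L →ₗ⁅R⁆ L'} (hf : Function.Surjective f)
    (hker : f.ker ≤ radical R L) : radical R L' ≤ (radical R L).map f := by
  calc radical R L' = ((radical R L').comap f).map f := by
        rw [map_comap_eq (f.isIdealMorphism_of_surjective hf),
          f.idealRange_eq_top_of_surjective hf, top_inf_eq]
    _ ≤ (radical R L).map f := map_mono (comap_le_radical_of_ker_le_radical f hker)

end Noetherian

lemma map_le_center {f : L →ₗ⁅R⁆ L'} (hf : Function.Surjective f) {I : LieIdeal R L}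
    (hI : ⁅(⊤ : LieIdeal R L), I⁆ ≤ f.ker) : I.map f ≤ center R L' := by
  rw [map_le_iff_le_comap]
  intro x hx
  rw [mem_comap, LieModule.mem_maxTrivSubmodule]
  intro z
  obtain ⟨y, rfl⟩ := hf z
  rw [← f.map_lie, ← LieHom.mem_ker]
  exact hI (LieSubmodule.lie_mem_lie (LieSubmodule.mem_top y) hx)

end LieIdeal

end

theorem statement14 (g : Type*) [LieRing g] [LieAlgebra ℂ g] [FiniteDimensional ℂ g] :
    LieAlgebra.radical ℂ (g ⧸ ⁅(⊤ : LieIdeal ℂ g), LieAlgebra.radical ℂ g⁆)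
      = LieAlgebra.center ℂ (g ⧸ ⁅(⊤ : LieIdeal ℂ g), LieAlgebra.radical ℂ g⁆) := by
  set J : LieIdeal ℂ g := ⁅(⊤ : LieIdeal ℂ g), radical ℂ g⁆
  have hker : J.quotientMk.ker = J := J.ker_quotientMk
  refine le_antisymm ?_ (center_le_radical ℂ _)
  calc radical ℂ (g ⧸ J) ≤ (radical ℂ g).map J.quotientMk :=
        LieIdeal.radical_le_map_radical J.quotientMk_surjective
          (hker.trans_le (LieSubmodule.lie_le_right _ _))
    _ ≤ center ℂ (g ⧸ J) := LieIdeal.map_le_center J.quotientMk_surjective hker.ge
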